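/- For n ≥ 2 and β ∈ T_n, f_{n+1}(ι^R(β)·t_n) = f_n(β); equivalently, det(ψ_{n+1}(ι^R(β)t_n) − I_n) = −x·(U_n(1/x)/U_{n−1}(1/x))·det(ψ_n(β) − I_{n−1}). -/
import Mathlib


open Matrix Polynomial

/-- Deformed Tits matrix `V_i` (generator index `i` is 1-based, `1 ≤ i ≤ m`):
the identity `m × m` matrix except column `i`, which has `-1` on the diagonal,
`y` in row `i-1` and `x` in row `i+1`. -/
def Vmat {R : Type*} [CommRing R] (x y : R) (m i : ℕ) : Matrix (Fin m) (Fin m) R :=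
  Matrix.of fun r c =>
    if (c : ℕ) + 1 = i then
      if (r : ℕ) + 1 = i then -1
      else if (r : ℕ) + 2 = i then y
      else if (r : ℕ) = i then x
      else 0
    else if r = c then 1 else 0

/-- Relators of the twin group with `m` generators (the twin group on `m+1` strands). -/
def twinRels (m : ℕ) : Set (FreeGroup (Fin m)) :=
  {r | (∃ i, r = FreeGroup.of i * FreeGroup.of i) ∨
       (∃ i j : Fin m, (i : ℕ) + 1 < (j : ℕ) ∧
          r = FreeGroup.of i * FreeGroup.of j * (FreeGroup.of i)⁻¹ * (FreeGroup.of j)⁻¹)}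

/-- The twin group `T_{m+1}` on `m+1` strands, with `m` generators `t_1, …, t_m`;
the generator `t_{i+1}` is `TwinGroup.of i` for `i : Fin m`. -/
def TwinGroup (m : ℕ) : Type := PresentedGroup (twinRels m)

instance (m : ℕ) : Group (TwinGroup m) :=
  inferInstanceAs (Group (PresentedGroup (twinRels m)))

/-- The generator `t_{i+1}` of the twin group. -/
def TwinGroup.of {m : ℕ} (i : Fin m) : TwinGroup m := PresentedGroup.of i

/-- The field `ℤ(x)` of rational functions over `ℤ`. -/
noncomputable abbrev Zx : Type := FractionRing (Polynomial ℤ)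

/-- The element `x` of `ℤ(x)`. -/
noncomputable def xx : Zx := algebraMap (Polynomial ℤ) Zx Polynomial.X

/-- `U_n(1/x)` as an element of `ℤ(x)`, `U_n` the `n`-th Chebyshev polynomial
of the second kind. -/
noncomputable def Ux (n : ℕ) : Zx := Polynomial.eval xx⁻¹ (Polynomial.Chebyshev.U Zx n)


set_option maxHeartbeats 1000000
set_option synthInstance.maxHeartbeats 400000

section Aux

lemma xx_ne : xx ≠ 0 := by
  simp only [xx, Ne, map_eq_zero_iff _ (IsFractionRing.injective (Polynomial ℤ) Zx)]
  exact Polynomial.X_ne_zero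

lemma Ux_zero : Ux 0 = 1 := by simp [Ux, Polynomial.Chebyshev.U_zero]

lemma Ux_one : Ux 1 = 2 * xx⁻¹ := by
  simp [Ux, Polynomial.Chebyshev.U_one]

lemma Ux_rec (k : ℕ) : Ux (k + 2) = 2 * xx⁻¹ * Ux (k + 1) - Ux k := by
  have h := Polynomial.Chebyshev.U_add_two Zx (k : ℤ)
  simp only [Ux]
  push_cast
  rw [h]
  simp [Polynomial.eval_sub, Polynomial.eval_mul]

lemma xx_Ux_rec (k : ℕ) : xx * Ux (k + 2) = 2 * Ux (k + 1) - xx * Ux k := by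
  rw [Ux_rec, show xx * (2 * xx⁻¹ * Ux (k+1) - Ux k)
      = 2 * (xx * xx⁻¹) * Ux (k+1) - xx * Ux k by ring, mul_inv_cancel₀ xx_ne]
  ring

lemma xx_Ux_one : xx * Ux 1 = 2 := by
  rw [Ux_one, show xx * (2 * xx⁻¹) = 2 * (xx * xx⁻¹) by ring, mul_inv_cancel₀ xx_ne, mul_one]

noncomputable def Prev : ℕ → Polynomial ℤ
  | 0 => 1
  | 1 => 2
  | (k+2) => 2 * Prev (k+1) - Polynomial.X ^ 2 * Prev k

lemma hPrev : ∀ k, xx ^ k * Ux k = algebraMap (Polynomial ℤ) Zx (Prev k) := by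
  have key : ∀ k, xx ^ k * Ux k = algebraMap (Polynomial ℤ) Zx (Prev k) ∧
      xx ^ (k+1) * Ux (k+1) = algebraMap (Polynomial ℤ) Zx (Prev (k+1)) := by
    intro k
    induction k with
    | zero =>
      constructor
      · simp [Ux_zero, Prev]
      · rw [Prev, pow_one, xx_Ux_one]
        exact (map_ofNat _ 2).symm
    | succ n ih =>
      refine ⟨ih.2, ?_⟩
      have e1 : xx ^ (n+2) * Ux (n+2) = 2 * (xx^(n+1) * Ux (n+1)) - xx^2 * (xx^n * Ux n) := by
        rw [Ux_rec, show xx ^ (n+2) * (2*xx⁻¹*Ux (n+1) - Ux n)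
            = 2*(xx*xx⁻¹)*(xx^(n+1)*Ux (n+1)) - xx^2*(xx^n*Ux n) by ring, mul_inv_cancel₀ xx_ne]
        ring
      rw [show n + 1 + 1 = n + 2 by ring, Prev, e1, ih.1, ih.2, map_sub, _root_.map_mul,
        _root_.map_mul, map_ofNat, map_pow]
      rfl
  exact fun k => (key k).1

lemma Prev_ne (k : ℕ) : Prev k ≠ 0 := by
  have h : ∀ k, (Prev k).eval 0 = 2 ^ k ∧ (Prev (k+1)).eval 0 = 2 ^ (k+1) := by
    intro k
    induction k with
    | zero => constructor <;> simp [Prev]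
    | succ n ih =>
      refine ⟨ih.2, ?_⟩
      rw [show n + 1 + 1 = n + 2 by ring, Prev]
      simp [ih.2]
      ring
  intro hk
  have := (h k).1
  rw [hk] at this
  simp at this
  exact absurd this.symm (by positivity)

lemma Ux_ne (k : ℕ) : Ux k ≠ 0 := by
  intro h
  have hP := hPrev k
  rw [h, mul_zero] at hP
  exact Prev_ne k ((map_eq_zero_iff _ (IsFractionRing.injective (Polynomial ℤ) Zx)).mp hP.symm)

lemma Vmat_last_col {m : ℕ} (j : ℕ) (hj : j < m) (r : Fin (m+1)) :
    Vmat xx xx (m+1) (j+1) r (Fin.last m) = if r = Fin.last m then 1 else 0 := by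
  have : ¬ ((Fin.last m : ℕ) + 1 = j + 1) := by simp [Fin.last]; omega
  simp only [Vmat, Matrix.of_apply, if_neg this]

lemma Vmat_block {m : ℕ} (i : ℕ) (r c : Fin m) :
    Vmat xx xx (m+1) i r.castSucc c.castSucc = Vmat xx xx m i r c := by
  simp only [Vmat, Matrix.of_apply, Fin.coe_castSucc, Fin.castSucc_inj]

lemma Vmat_row {m : ℕ} (j : ℕ) (hj : j < m) (c : Fin (m+1)) :
    (∑ r : Fin (m+1), Ux r * Vmat xx xx (m+1) (j+1) r c) = Ux c := by
  by_cases hc : (c : ℕ) = j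
  · have hcc : (c : ℕ) + 1 = j + 1 := by omega
    match j, hj with
    | 0, hj =>
      set a : Fin (m+1) := ⟨0, by omega⟩ with ha'
      set b : Fin (m+1) := ⟨1, by omega⟩ with hb'
      have hab : a ≠ b := by simp [ha', hb', Fin.ext_iff]
      have hS : ∀ x : Fin (m+1), x ∉ ({a, b} : Finset (Fin (m+1))) →
          Ux x * Vmat xx xx (m+1) 1 x c = 0 := by
        intro x hx
        simp only [Finset.mem_insert, Finset.mem_singleton] at hx
        push_neg at hx
        have hxa : (x : ℕ) ≠ 0 := fun h => hx.1 (Fin.ext h)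
        have hxb : (x : ℕ) ≠ 1 := fun h => hx.2 (Fin.ext h)
        have hxc : x ≠ c := fun h => hxa (by rw [h, hc])
        simp only [Vmat, Matrix.of_apply, if_pos hcc]
        rw [if_neg (by omega), if_neg (by omega), if_neg (by omega)]
        simp [hxc]
      rw [← Finset.sum_subset (Finset.subset_univ {a, b}) (fun x _ hx => hS x hx)]
      rw [Finset.sum_pair hab]
      simp only [Vmat, Matrix.of_apply, if_pos hcc]
      rw [if_pos (by simp [ha'] <;> omega), if_neg (by simp [hb'] <;> omega),
        if_neg (by simp [hb'] <;> omega), if_pos (by simp [hb'] <;> omega)]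
      have ha : Ux (a : ℕ) = Ux 0 := rfl
      have hb : Ux (b : ℕ) = Ux 1 := rfl
      rw [ha, hb, hc, Ux_zero]
      linear_combination xx_Ux_one
    | (p+1), hj =>
      set a : Fin (m+1) := ⟨p, by omega⟩
      set b : Fin (m+1) := ⟨p+1, by omega⟩
      set d : Fin (m+1) := ⟨p+2, by omega⟩
      have hab : a ≠ b := by simp [a, b, Fin.ext_iff]
      have had : a ≠ d := by simp [a, d, Fin.ext_iff]
      have hbd : b ≠ d := by simp [b, d, Fin.ext_iff]
      have hS : ∀ x : Fin (m+1), x ∉ ({a, b, d} : Finset (Fin (m+1))) →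
          Ux x * Vmat xx xx (m+1) (p+1+1) x c = 0 := by
        intro x hx
        simp only [Finset.mem_insert, Finset.mem_singleton] at hx
        push_neg at hx
        have hxa : (x : ℕ) ≠ p := fun h => hx.1 (Fin.ext h)
        have hxb : (x : ℕ) ≠ p+1 := fun h => hx.2.1 (Fin.ext h)
        have hxd : (x : ℕ) ≠ p+2 := fun h => hx.2.2 (Fin.ext h)
        have hxc : x ≠ c := fun h => hxb (by rw [h, hc])
        simp only [Vmat, Matrix.of_apply, if_pos hcc]
        rw [if_neg (by omega), if_neg (by omega), if_neg (by omega)]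
        simp [hxc]
      rw [← Finset.sum_subset (Finset.subset_univ {a, b, d}) (fun x _ hx => hS x hx)]
      rw [Finset.sum_insert (by simp [Finset.mem_insert, hab, had]),
        Finset.sum_insert (by simp [hbd]), Finset.sum_singleton]
      simp only [Vmat, Matrix.of_apply, if_pos hcc]
      rw [if_neg (by simp [a] <;> omega), if_pos (by simp [a] <;> omega),
        if_pos (by simp [b] <;> omega),
        if_neg (by simp [d] <;> omega), if_neg (by simp [d] <;> omega),
        if_pos (by simp [d] <;> omega)]
      have ha : Ux (a : ℕ) = Ux p := rfl
      have hb : Ux (b : ℕ) = Ux (p+1) := rfl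
      have hd : Ux (d : ℕ) = Ux (p+2) := rfl
      rw [ha, hb, hd, hc]
      linear_combination xx_Ux_rec p
  · have : ¬ ((c : ℕ) + 1 = j + 1) := by omega
    simp only [Vmat, Matrix.of_apply, if_neg this, mul_ite, mul_one, mul_zero]
    rw [Finset.sum_ite_eq' Finset.univ c (fun r => Ux (r : ℕ))]
    simp

/-- row vector `Ux` through the last generator matrix. -/
lemma Vmat_row_last' {p : ℕ} (c : Fin (p+2)) :
    (∑ r : Fin (p+2), Ux r * Vmat xx xx (p+2) (p+2) r c)
      = if c = Fin.last (p+1) then xx * Ux p - Ux (p+1) else Ux c := by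
  by_cases hc : c = Fin.last (p+1)
  · rw [if_pos hc]
    have hcc : (c : ℕ) + 1 = p + 2 := by rw [hc]; simp [Fin.last]
    set a : Fin (p+2) := ⟨p, by omega⟩
    set b : Fin (p+2) := ⟨p+1, by omega⟩
    have hab : a ≠ b := by simp [a, b, Fin.ext_iff]
    have hS : ∀ x : Fin (p+2), x ∉ ({a, b} : Finset (Fin (p+2))) →
        Ux x * Vmat xx xx (p+2) (p+2) x c = 0 := by
      intro x hx
      simp only [Finset.mem_insert, Finset.mem_singleton] at hx
      push_neg at hx
      have hxa : (x : ℕ) ≠ p := fun h => hx.1 (Fin.ext h)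
      have hxb : (x : ℕ) ≠ p+1 := fun h => hx.2 (Fin.ext h)
      have hxv : (x : ℕ) < p + 2 := x.isLt
      simp only [Vmat, Matrix.of_apply, if_pos hcc]
      rw [if_neg (by omega), if_neg (by omega), if_neg (by omega)]
      simp
    rw [← Finset.sum_subset (Finset.subset_univ {a, b}) (fun x _ hx => hS x hx)]
    rw [Finset.sum_pair hab]
    simp only [Vmat, Matrix.of_apply, if_pos hcc]
    rw [if_neg (by simp [a] <;> omega), if_pos (by simp [a] <;> omega),
      if_pos (by simp [b] <;> omega)]
    have ha : Ux (a : ℕ) = Ux p := rfl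
    have hb : Ux (b : ℕ) = Ux (p+1) := rfl
    rw [ha, hb]
    ring
  · rw [if_neg hc]
    have : ¬ ((c : ℕ) + 1 = p + 2) := by
      intro h
      exact hc (Fin.ext (by simp [Fin.last]; omega))
    simp only [Vmat, Matrix.of_apply, if_neg this, mul_ite, mul_one, mul_zero]
    rw [Finset.sum_ite_eq' Finset.univ c (fun r => Ux (r : ℕ))]
    simp


lemma cheb_last (m : ℕ) (hm : 1 ≤ m) : xx * Ux (m-1) - 2 * Ux m = - (xx * Ux (m+1)) := by
  obtain ⟨p, rfl⟩ : ∃ p, m = p + 1 := ⟨m - 1, by omega⟩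
  rw [Nat.add_sub_cancel]
  linear_combination xx_Ux_rec p

lemma Vmat_row_last {m : ℕ} (hm : 1 ≤ m) (c : Fin (m+1)) :
    (∑ r : Fin (m+1), Ux r * Vmat xx xx (m+1) (m+1) r c)
      = if c = Fin.last m then xx * Ux (m-1) - Ux m else Ux c := by
  obtain ⟨p, rfl⟩ : ∃ p, m = p + 1 := ⟨m - 1, by omega⟩
  rw [Nat.add_sub_cancel]
  exact Vmat_row_last' c

lemma row_pass {m : ℕ} (A B : Matrix (Fin (m+1)) (Fin (m+1)) Zx)
    (hA : ∀ c, ∑ r : Fin (m+1), Ux r * A r c = Ux c) (c : Fin (m+1)) :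
    ∑ r : Fin (m+1), Ux r * (A * B) r c = ∑ j : Fin (m+1), Ux j * B j c := by
  simp only [Matrix.mul_apply, Finset.mul_sum]
  rw [Finset.sum_comm]
  refine Finset.sum_congr rfl fun j _ => ?_
  simp only [← mul_assoc, ← Finset.sum_mul, hA j]

lemma sum_mul_ite {m : ℕ} (f : Fin m → Zx) (b : Fin m) :
    (∑ j : Fin m, f j * (if j = b then (1:Zx) else 0)) = f b := by
  simp only [mul_ite, mul_one, mul_zero]
  rw [Finset.sum_ite_eq' Finset.univ b f]
  simp

/-- The invariant carried by `ψ' ∘ ιR`. -/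
lemma invariant (m : ℕ)
    (ψ : TwinGroup m →* Matrix (Fin m) (Fin m) Zx)
    (hψ : ∀ i : Fin m, ψ (TwinGroup.of i) = Vmat xx xx m ((i : ℕ) + 1))
    (ψ' : TwinGroup (m+1) →* Matrix (Fin (m+1)) (Fin (m+1)) Zx)
    (hψ' : ∀ i : Fin (m+1), ψ' (TwinGroup.of i) = Vmat xx xx (m+1) ((i : ℕ) + 1))
    (ιR : TwinGroup m →* TwinGroup (m+1))
    (hιR : ∀ i : Fin m, ιR (TwinGroup.of i) = TwinGroup.of i.castSucc)
    (g : TwinGroup m) :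
    (∀ c, ∑ r : Fin (m+1), Ux r * ψ' (ιR g) r c = Ux c) ∧
    (∀ r, ψ' (ιR g) r (Fin.last m) = if r = Fin.last m then 1 else 0) ∧
    (∀ r c : Fin m, ψ' (ιR g) r.castSucc c.castSucc = ψ g r c) := by
  set P : TwinGroup m → Prop := fun g =>
    (∀ c, ∑ r : Fin (m+1), Ux r * ψ' (ιR g) r c = Ux c) ∧
    (∀ r, ψ' (ιR g) r (Fin.last m) = if r = Fin.last m then 1 else 0) ∧
    (∀ r c : Fin m, ψ' (ιR g) r.castSucc c.castSucc = ψ g r c) with hP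
  have hone : P 1 := by
    refine ⟨?_, ?_, ?_⟩ <;> simp only [_root_.map_one]
    · intro c
      simp only [Matrix.one_apply]
      exact sum_mul_ite _ c
    · intro r
      simp [Matrix.one_apply]
    · intro r c
      simp [Matrix.one_apply, Fin.castSucc_inj]
  have hmul : ∀ a b, P a → P b → P (a * b) := by
    intro a b ha hb
    simp only [hP, _root_.map_mul] at ha hb ⊢
    set A := ψ' (ιR a)
    set B := ψ' (ιR b)
    refine ⟨?_, ?_, ?_⟩
    · intro c
      rw [row_pass A B ha.1 c]
      exact hb.1 c
    · intro r
      rw [Matrix.mul_apply]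
      calc (∑ j, A r j * B j (Fin.last m))
          = ∑ j, A r j * (if j = Fin.last m then 1 else 0) := by
            refine Finset.sum_congr rfl fun j _ => ?_
            rw [hb.2.1 j]
        _ = A r (Fin.last m) := sum_mul_ite _ _
        _ = if r = Fin.last m then 1 else 0 := ha.2.1 r
    · intro r c
      rw [Matrix.mul_apply, Matrix.mul_apply, Fin.sum_univ_castSucc]
      have hz : A r.castSucc (Fin.last m) = 0 := by
        rw [ha.2.1]
        exact if_neg (Fin.castSucc_lt_last r).ne
      rw [hz, zero_mul, add_zero]
      refine Finset.sum_congr rfl fun j _ => ?_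
      rw [ha.2.2, hb.2.2]
  have hinv : ∀ a, P a → P a⁻¹ := by
    intro a ha
    simp only [hP] at ha ⊢
    set A := ψ' (ιR a)
    set B := ψ' (ιR a⁻¹)
    have hAB : A * B = 1 := by
      rw [← _root_.map_mul, ← _root_.map_mul, mul_inv_cancel, _root_.map_one, _root_.map_one]
    have hBA : B * A = 1 := by
      rw [← _root_.map_mul, ← _root_.map_mul, inv_mul_cancel, _root_.map_one, _root_.map_one]
    have hone' : ∀ c, ∑ r : Fin (m+1), Ux r * (1 : Matrix (Fin (m+1)) (Fin (m+1)) Zx) r c = Ux c := by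
      intro c
      simp only [Matrix.one_apply]
      exact sum_mul_ite _ c
    refine ⟨?_, ?_, ?_⟩
    · intro c
      have h1 : ∑ r : Fin (m+1), Ux r * (A * B) r c = ∑ j : Fin (m+1), Ux j * B j c := row_pass A B ha.1 c
      rw [hAB] at h1
      rw [← h1]
      exact hone' c
    · intro r
      have h1 : (B * A) r (Fin.last m) = B r (Fin.last m) := by
        rw [Matrix.mul_apply]
        calc (∑ j, B r j * A j (Fin.last m))
            = ∑ j, B r j * (if j = Fin.last m then 1 else 0) := by
              refine Finset.sum_congr rfl fun j _ => ?_
              rw [ha.2.1 j]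
          _ = B r (Fin.last m) := sum_mul_ite _ _
      rw [← h1, hBA, Matrix.one_apply]
    · -- block of the inverse
      have hBcol : ∀ r, B r (Fin.last m) = if r = Fin.last m then 1 else 0 := by
        intro r
        have h1 : (B * A) r (Fin.last m) = B r (Fin.last m) := by
          rw [Matrix.mul_apply]
          calc (∑ j, B r j * A j (Fin.last m))
              = ∑ j, B r j * (if j = Fin.last m then 1 else 0) := by
                refine Finset.sum_congr rfl fun j _ => ?_
                rw [ha.2.1 j]
            _ = B r (Fin.last m) := sum_mul_ite _ _
        rw [← h1, hBA, Matrix.one_apply]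
      set Bblk : Matrix (Fin m) (Fin m) Zx :=
        Matrix.of fun r c => B r.castSucc c.castSucc with hBblk
      have hblk : ψ a * Bblk = 1 := by
        ext r c
        rw [Matrix.mul_apply]
        have h1 : (A * B) r.castSucc c.castSucc = ∑ j, ψ a r j * Bblk j c := by
          rw [Matrix.mul_apply, Fin.sum_univ_castSucc]
          have hz : A r.castSucc (Fin.last m) = 0 := by
            rw [ha.2.1]
            exact if_neg (Fin.castSucc_lt_last r).ne
          rw [hz, zero_mul, add_zero]
          refine Finset.sum_congr rfl fun j _ => ?_
          rw [ha.2.2]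
          rfl
        rw [← h1, hAB, Matrix.one_apply, Matrix.one_apply]
        simp [Fin.castSucc_inj]
      have hψinv : ψ a⁻¹ * ψ a = 1 := by
        rw [← _root_.map_mul, inv_mul_cancel, _root_.map_one]
      have : Bblk = ψ a⁻¹ := by
        calc Bblk = 1 * Bblk := (one_mul _).symm
          _ = (ψ a⁻¹ * ψ a) * Bblk := by rw [hψinv]
          _ = ψ a⁻¹ * (ψ a * Bblk) := by rw [mul_assoc]
          _ = ψ a⁻¹ * 1 := by rw [hblk]
          _ = ψ a⁻¹ := mul_one _
      intro r c
      have := congrFun (congrFun this r) c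
      exact this
  have hgen : ∀ i : Fin m, P (TwinGroup.of i) := by
    intro i
    have hval : ((i.castSucc : Fin (m+1)) : ℕ) + 1 = (i : ℕ) + 1 := by
      simp [Fin.coe_castSucc]
    refine ⟨?_, ?_, ?_⟩ <;> rw [hιR i] <;>
      simp only [hψ' i.castSucc, Fin.coe_castSucc]
    · intro c
      exact Vmat_row (i : ℕ) i.isLt c
    · intro r
      exact Vmat_last_col (i : ℕ) i.isLt r
    · intro r c
      rw [Vmat_block, hψ i]
  -- now use that the generators generate
  set S : Subgroup (PresentedGroup (twinRels m)) :=
    { carrier := {g | P g}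
      one_mem' := hone
      mul_mem' := fun {a b} ha hb => hmul a b ha hb
      inv_mem' := fun {a} ha => hinv a ha } with hS
  exact PresentedGroup.generated_by (twinRels m) S (fun j => hgen j) g

lemma det_last_row {R : Type*} [CommRing R] {m : ℕ} (M : Matrix (Fin (m+1)) (Fin (m+1)) R)
    (d : R) (h : ∀ c, M (Fin.last m) c = if c = Fin.last m then d else 0) :
    M.det = d * (M.submatrix Fin.castSucc Fin.castSucc).det := by
  have hdet := Matrix.det_submatrix_equiv_self (finSumFinEquiv : Fin m ⊕ Fin 1 ≃ Fin (m+1)) M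
  have hl : ∀ i : Fin m, finSumFinEquiv (Sum.inl i) = i.castSucc := by
    intro i
    simp [finSumFinEquiv_apply_left, Fin.castSucc, Fin.castAdd]
  have hr : ∀ j : Fin 1, finSumFinEquiv (Sum.inr j) = Fin.last m := by
    intro j
    have : j = 0 := Subsingleton.elim _ _
    subst this
    apply Fin.ext
    simp [finSumFinEquiv_apply_right, Fin.natAdd, Fin.last]
  have hblock : M.submatrix finSumFinEquiv finSumFinEquiv =
      Matrix.fromBlocks (M.submatrix Fin.castSucc Fin.castSucc)
        (Matrix.of fun r (_ : Fin 1) => M r.castSucc (Fin.last m))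
        0 (Matrix.of fun _ _ => d) := by
    ext r c
    cases r with
    | inl i =>
      cases c with
      | inl j => simp [Matrix.submatrix_apply, hl, Matrix.fromBlocks]
      | inr j => simp [Matrix.submatrix_apply, hl, hr, Matrix.fromBlocks]
    | inr i =>
      cases c with
      | inl j =>
        simp only [Matrix.submatrix_apply, hl, hr, Matrix.fromBlocks_apply₂₁]
        rw [h]
        simp [(Fin.castSucc_lt_last j).ne]
      | inr j =>
        simp only [Matrix.submatrix_apply, hl, hr, Matrix.fromBlocks_apply₂₂]
        rw [h]
        simp
  rw [← hdet, hblock, Matrix.det_fromBlocks_zero₂₁]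
  rw [Matrix.det_fin_one]
  simp [mul_comm]

end Aux

/-- Lemma 4.8(a): for `n ≥ 2` (`n = m+1`) and `β ∈ T_n`,
`f_{n+1}(ι^R(β)·t_n) = f_n(β)`; precisely,
`det(ψ_{n+1}(ι^R(β) t_n) − I_n) = −x·(U_n(1/x)/U_{n−1}(1/x))·det(ψ_n(β) − I_{n−1})`. -/
theorem stmt15 (m : ℕ) (hm : 1 ≤ m)
    (ψ : TwinGroup m →* Matrix (Fin m) (Fin m) Zx)
    (hψ : ∀ i : Fin m, ψ (TwinGroup.of i) = Vmat xx xx m ((i : ℕ) + 1))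
    (ψ' : TwinGroup (m+1) →* Matrix (Fin (m+1)) (Fin (m+1)) Zx)
    (hψ' : ∀ i : Fin (m+1), ψ' (TwinGroup.of i) = Vmat xx xx (m+1) ((i : ℕ) + 1))
    (ιR : TwinGroup m →* TwinGroup (m+1))
    (hιR : ∀ i : Fin m, ιR (TwinGroup.of i) = TwinGroup.of i.castSucc)
    (β : TwinGroup m) :
    Matrix.det (ψ' (ιR β * TwinGroup.of (Fin.last m)) - 1) / ((-xx)^(m+1) * Ux (m+1))
        = Matrix.det (ψ β - 1) / ((-xx)^m * Ux m) ∧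
    Matrix.det (ψ' (ιR β * TwinGroup.of (Fin.last m)) - 1)
        = -xx * (Ux (m+1) / Ux m) * Matrix.det (ψ β - 1) := by
  
  -- abbreviations
  have hlastval : ((Fin.last m : Fin (m+1)) : ℕ) + 1 = m + 1 := by simp [Fin.last]
  set A := ψ' (ιR β) with hA
  have hγ : ψ' (ιR β * TwinGroup.of (Fin.last m)) = A * Vmat xx xx (m+1) (m+1) := by
    rw [_root_.map_mul, hψ' (Fin.last m), hlastval]
  set V := Vmat xx xx (m+1) (m+1) with hV
  obtain ⟨inv1, inv2, inv3⟩ := invariant m ψ hψ ψ' hψ' ιR hιR β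
  rw [← hA] at inv1 inv2 inv3
  set N : Matrix (Fin (m+1)) (Fin (m+1)) Zx := A * V - 1 with hN
  -- the row-operation matrix
  set E : Matrix (Fin (m+1)) (Fin (m+1)) Zx :=
    Matrix.of (fun r c => if r = Fin.last m then Ux c / Ux m else if r = c then 1 else 0)
    with hE
  have hEdet : E.det = 1 := by
    rw [← Matrix.det_transpose]
    have htri : E.transpose.BlockTriangular id := by
      intro i j hij
      show E j i = 0
      simp only [hE, Matrix.of_apply]
      rw [if_neg (fun h => absurd hij (by subst h; simpa using Fin.le_last i)),
        if_neg (fun h => (ne_of_lt hij) (congrArg id h))]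
    rw [Matrix.det_of_upperTriangular htri]
    apply Finset.prod_eq_one
    intro i _
    simp only [Matrix.transpose_apply, hE, Matrix.of_apply]
    by_cases hi : i = Fin.last m
    · rw [if_pos hi, hi]
      exact div_self (Ux_ne m)
    · simp [hi]
  -- last row of E * N
  have hwN : ∀ c, (∑ k : Fin (m+1), Ux k * N k c) = if c = Fin.last m then - (xx * Ux (m+1)) else 0 := by
    intro c
    have h1 : (∑ k : Fin (m+1), Ux k * (A * V) k c) = ∑ j : Fin (m+1), Ux j * V j c := row_pass A V inv1 c
    have h2 : (∑ j : Fin (m+1), Ux j * V j c)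
        = if c = Fin.last m then xx * Ux (m-1) - Ux m else Ux c := by
      rw [hV]
      exact Vmat_row_last hm c
    have h3 : (∑ k : Fin (m+1), Ux k * (1 : Matrix (Fin (m+1)) (Fin (m+1)) Zx) k c) = Ux c := by
      simp only [Matrix.one_apply]
      exact sum_mul_ite _ c
    have : (∑ k : Fin (m+1), Ux k * N k c) = (∑ k : Fin (m+1), Ux k * (A * V) k c)
        - (∑ k : Fin (m+1), Ux k * (1 : Matrix (Fin (m+1)) (Fin (m+1)) Zx) k c) := by
      rw [← Finset.sum_sub_distrib]
      refine Finset.sum_congr rfl fun k _ => ?_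
      simp only [hN, Matrix.sub_apply]
      ring
    rw [this, h1, h2, h3]
    by_cases hc : c = Fin.last m
    · rw [if_pos hc, if_pos hc]
      have hcv : Ux (c : ℕ) = Ux m := by rw [hc]; rfl
      rw [hcv]
      linear_combination cheb_last m hm
    · rw [if_neg hc, if_neg hc, sub_self]
  have hENlast : ∀ c, (E * N) (Fin.last m) c
      = if c = Fin.last m then (- (xx * Ux (m+1))) / Ux m else 0 := by
    intro c
    rw [Matrix.mul_apply]
    have : (∑ k : Fin (m+1), E (Fin.last m) k * N k c) = (∑ k : Fin (m+1), Ux k * N k c) / Ux m := by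
      rw [Finset.sum_div]
      refine Finset.sum_congr rfl fun k _ => ?_
      simp only [hE, Matrix.of_apply, eq_self_iff_true, if_true]
      ring
    rw [this, hwN c]
    by_cases hc : c = Fin.last m
    · rw [if_pos hc, if_pos hc]
    · rw [if_neg hc, if_neg hc, zero_div]
  have hENother : ∀ (r : Fin m) (c : Fin (m+1)), (E * N) r.castSucc c = N r.castSucc c := by
    intro r c
    rw [Matrix.mul_apply]
    have : ∀ k, E r.castSucc k = if k = r.castSucc then 1 else 0 := by
      intro k
      simp only [hE, Matrix.of_apply, if_neg (Fin.castSucc_lt_last r).ne]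
      by_cases h : r.castSucc = k
      · rw [if_pos h, if_pos h.symm]
      · rw [if_neg h, if_neg (fun hh => h hh.symm)]
    calc (∑ k, E r.castSucc k * N k c)
        = ∑ k, (if k = r.castSucc then (1:Zx) else 0) * N k c := by
          refine Finset.sum_congr rfl fun k _ => ?_
          rw [this k]
      _ = ∑ k, N k c * (if k = r.castSucc then (1:Zx) else 0) := by
          refine Finset.sum_congr rfl fun k _ => ?_
          ring
      _ = N r.castSucc c := sum_mul_ite _ _
  -- block of N is ψ β - 1
  have hNblock : ∀ r c : Fin m, N r.castSucc c.castSucc = (ψ β - 1) r c := by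
    intro r c
    have hAV : (A * V) r.castSucc c.castSucc = ψ β r c := by
      rw [Matrix.mul_apply, Fin.sum_univ_castSucc]
      have hz : A r.castSucc (Fin.last m) = 0 := by
        rw [inv2]
        exact if_neg (Fin.castSucc_lt_last r).ne
      rw [hz, zero_mul, add_zero]
      have hVblk : ∀ j : Fin m, V j.castSucc c.castSucc = if j = c then (1:Zx) else 0 := by
        intro j
        rw [hV, Vmat_block]
        have : ¬ ((c : ℕ) + 1 = m + 1) := by
          have := c.isLt
          omega
        simp only [Vmat, Matrix.of_apply, if_neg this]
      calc (∑ j : Fin m, A r.castSucc j.castSucc * V j.castSucc c.castSucc)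
          = ∑ j : Fin m, ψ β r j * (if j = c then (1:Zx) else 0) := by
            refine Finset.sum_congr rfl fun j _ => ?_
            rw [inv3, hVblk]
        _ = ψ β r c := sum_mul_ite _ _
    simp only [hN, Matrix.sub_apply, hAV, Matrix.one_apply, Fin.castSucc_inj]
  -- determinant computation
  have hsub : (E * N).submatrix Fin.castSucc Fin.castSucc = ψ β - 1 := by
    ext r c
    rw [Matrix.submatrix_apply, hENother r c.castSucc, hNblock r c]
  have hkey : N.det = (- (xx * Ux (m+1)) / Ux m) * (ψ β - 1).det := by
    have h1 : (E * N).det = N.det := by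
      rw [Matrix.det_mul, hEdet, one_mul]
    rw [← h1, det_last_row (E * N) _ hENlast, hsub]
  have hmain : Matrix.det (ψ' (ιR β * TwinGroup.of (Fin.last m)) - 1)
      = (- (xx * Ux (m+1)) / Ux m) * (ψ β - 1).det := by
    rw [hγ]
    exact hkey
  constructor
  · rw [hmain]
    have hxm : (-xx) ≠ 0 := neg_ne_zero.mpr xx_ne
    have h1 : Ux m ≠ 0 := Ux_ne m
    have h2 : Ux (m+1) ≠ 0 := Ux_ne (m+1)
    field_simp
    ring
  · rw [hmain]
    have h1 : Ux m ≠ 0 := Ux_ne m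
    field_simp
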